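/- arXiv:2506.06160 — 3 statements merged into one kernel-verified Lean document; each statement's English description precedes it below -/
import Mathlib

section
/- For every real κ ≥ 1, setting k* := ⌈log κ / log ρ⌉ + 1 (the ceiling of the base-ρ logarithm of κ, plus one), one has 2κ · r_{k*} ≤ 2/ρ < 1. -/
/-!
Put `n := ⌈log_ρ κ⌉₊`, so that `κ ≤ ρⁿ`, and `x := ρⁿ⁺¹ ≥ ρκ`. Since `4x² - 3 ≥ x²` for `x ≥ 1`,
`r_{n+1} = (1 + √(4x² - 3))⁻¹ ≤ x⁻¹`, hence `2κ r_{n+1} ≤ 2κ / (ρκ) = 2/ρ`, and `2/ρ < 1` as `ρ > 2`.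
-/

/-- The silver ratio `ρ = 1 + √2`. -/
noncomputable def silverRho : ℝ := 1 + Real.sqrt 2

/-- The silver rate `r_k = (1 + √(4 ρ^(2k) - 3))⁻¹`. -/
noncomputable def silverRate (k : ℕ) : ℝ :=
  (1 + Real.sqrt (4 * silverRho ^ (2 * k) - 3))⁻¹

open Real

lemma le_pow_toNat_ceil_log_div_log {b x : ℝ} (hb : 1 < b) (hx : 0 < x) :
    x ≤ b ^ (⌈log x / log b⌉).toNat := by
  have hexp : logb b x ≤ ((⌈log x / log b⌉).toNat : ℝ) := by
    rw [← log_div_log]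
    exact (Int.le_ceil _).trans (by exact_mod_cast Int.self_le_toNat _)
  calc x = b ^ logb b x := (rpow_logb (by linarith) hb.ne' hx).symm
    _ ≤ b ^ ((⌈log x / log b⌉).toNat : ℝ) := rpow_le_rpow_of_exponent_le hb.le hexp
    _ = b ^ (⌈log x / log b⌉).toNat := rpow_natCast _ _

lemma le_sqrt_four_mul_sq_sub_three {x : ℝ} (hx : 1 ≤ x) : x ≤ √(4 * x ^ 2 - 3) :=
  le_sqrt_of_sq_le (by nlinarith)

lemma two_lt_silverRho : 2 < silverRho := by
  have : 1 < √2 := by rw [lt_sqrt zero_le_one]; norm_num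
  unfold silverRho
  linarith

lemma silverRate_le_inv_pow (k : ℕ) : silverRate k ≤ (silverRho ^ k)⁻¹ := by
  have hx : 1 ≤ silverRho ^ k := one_le_pow₀ (by linarith [two_lt_silverRho])
  unfold silverRate
  rw [pow_mul']
  gcongr
  linarith [le_sqrt_four_mul_sq_sub_three hx]

/-- Key quantitative step of Theorem 4.2: for `κ ≥ 1` and
`k* = ⌈log_ρ κ⌉ + 1`, one has `2 κ r_{k*} ≤ 2/ρ < 1`. -/
theorem silver_restart_contraction (κ : ℝ) (hκ : 1 ≤ κ) :
    2 * κ * silverRate ((⌈Real.log κ / Real.log silverRho⌉).toNat + 1) ≤ 2 / silverRho ∧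
      2 / silverRho < 1 := by
  have hρ : 2 < silverRho := two_lt_silverRho
  set n := (⌈Real.log κ / Real.log silverRho⌉).toNat
  have hκn : κ ≤ silverRho ^ n := le_pow_toNat_ceil_log_div_log (by linarith) (by linarith)
  refine ⟨?_, (div_lt_one (by linarith)).2 hρ⟩
  calc 2 * κ * silverRate (n + 1)
      ≤ 2 * κ * (silverRho ^ (n + 1))⁻¹ := by
        gcongr
        exact silverRate_le_inv_pow _
    _ = 2 / silverRho * (κ / silverRho ^ n) := by rw [pow_succ]; field_simp
    _ ≤ 2 / silverRho :=
        mul_le_of_le_one_right (by positivity) (div_le_one_of_le₀ hκn (by positivity))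
end

section
/- Let f : ℝ^d → ℝ be differentiable, let x_0 ∈ ℝ^d, let x_* ∈ ℝ^d satisfy ∇f(x_*) = 0, and set x_1 := x_0 − (ρ − 1)·∇f(x_0). Then, with Q(u, v) := 2(f(u) − f(v)) − 2⟨∇f(v), u − v⟩ − ‖∇f(u) − ∇f(v)‖² and a_1 := (1 + √(4ρ² − 3))/2, the following identity holds: ρ·Q(x_0, x_1) + Q(x_1, x_0) + (ρ−1)·Q(x_1, x_*) + (ρ−1)·Q(x_*, x_0) + a_1·Q(x_*, x_1) = 2a_1(f(x_*) − f(x_1)) − [a_1²‖∇f(x_1)‖² + 2a_1⟨∇f(x_1), x_* − x_1⟩ + 2‖∇f(x_0)‖² + 2(ρ−1)⟨∇f(x_0), x_* − x_0⟩]. -/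
/-!
Substituting `x₀ - x₁ = (ρ - 1) ∇f(x₀)` and `∇f(x_*) = 0` turns both sides into polynomials in
`ρ`, `a₁`, the function values and the Gram entries of `∇f(x₀), ∇f(x₁)`; their difference is
`-2⟪∇f(x₀), ∇f(x₁)⟫ (ρ² - 2ρ - 1) + ‖∇f(x₁)‖² (a₁² - a₁ - 2ρ)`, so the identity holds for any
vector field in place of the gradient, in any real inner product space.
-/

open scoped InnerProductSpace

section
variable {E : Type*} [NormedAddCommGroup E] [InnerProductSpace ℝ E]

def cocoercivityGap (f : E → ℝ) (g : E → E) (u v : E) : ℝ :=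
  2 * (f u - f v) - 2 * ⟪g v, u - v⟫_ℝ - ‖g u - g v‖ ^ 2

theorem silver_step_identity (f : E → ℝ) (g : E → E) {x0 x1 xstar : E} {ρ a : ℝ}
    (hx1 : x1 = x0 - (ρ - 1) • g x0) (hstar : g xstar = 0)
    (hρ : ρ ^ 2 = 2 * ρ + 1) (ha : a ^ 2 = a + 2 * ρ) :
    ρ * cocoercivityGap f g x0 x1 + cocoercivityGap f g x1 x0
        + (ρ - 1) * cocoercivityGap f g x1 xstar + (ρ - 1) * cocoercivityGap f g xstar x0
        + a * cocoercivityGap f g xstar x1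
      = 2 * a * (f xstar - f x1)
        - (a ^ 2 * ‖g x1‖ ^ 2 + 2 * a * ⟪g x1, xstar - x1⟫_ℝ + 2 * ‖g x0‖ ^ 2
          + 2 * (ρ - 1) * ⟪g x0, xstar - x0⟫_ℝ) := by
  have hx01 : x0 - x1 = (ρ - 1) • g x0 := by rw [hx1]; abel
  have hx10 : x1 - x0 = -((ρ - 1) • g x0) := by rw [hx1]; abel
  simp only [cocoercivityGap, hstar, hx01, hx10, inner_zero_left, sub_zero, zero_sub, norm_neg,
    inner_neg_right, real_inner_smul_right, norm_sub_sq_real, real_inner_comm (g x0) (g x1),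
    real_inner_self_eq_norm_sq]
  linear_combination (-2 * ⟪g x0, g x1⟫_ℝ) * hρ + ‖g x1‖ ^ 2 * ha

end

theorem sq_half_one_add_sqrt {s : ℝ} (hs : 0 ≤ s) :
    ((1 + √s) / 2) ^ 2 = (1 + √s) / 2 + (s - 1) / 4 := by
  linear_combination (Real.sq_sqrt hs) / 4

theorem silverRho_sq : silverRho ^ 2 = 2 * silverRho + 1 := by
  rw [silverRho]
  linear_combination (Real.sq_sqrt (zero_le_two : (0:ℝ) ≤ 2))

theorem one_le_silverRho : 1 ≤ silverRho :=
  le_add_of_nonneg_right (Real.sqrt_nonneg 2)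

theorem silver_a1_sq :
    ((1 + √(4 * silverRho ^ 2 - 3)) / 2) ^ 2
      = (1 + √(4 * silverRho ^ 2 - 3)) / 2 + 2 * silverRho := by
  rw [sq_half_one_add_sqrt (by nlinarith [one_le_silverRho])]
  linear_combination silverRho_sq

theorem silver_base_case_identity_general {d : ℕ}
    (f : EuclideanSpace ℝ (Fin d) → ℝ)
    (x0 xstar : EuclideanSpace ℝ (Fin d)) (hstar : gradient f xstar = 0) :
    let Q : EuclideanSpace ℝ (Fin d) → EuclideanSpace ℝ (Fin d) → ℝ := fun u v =>
      2 * (f u - f v) - 2 * ⟪gradient f v, u - v⟫_ℝ - ‖gradient f u - gradient f v‖ ^ 2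
    let a1 : ℝ := (1 + Real.sqrt (4 * silverRho ^ 2 - 3)) / 2
    let x1 : EuclideanSpace ℝ (Fin d) := x0 - (silverRho - 1) • gradient f x0
    silverRho * Q x0 x1 + Q x1 x0 + (silverRho - 1) * Q x1 xstar
        + (silverRho - 1) * Q xstar x0 + a1 * Q xstar x1
      = 2 * a1 * (f xstar - f x1)
        - (a1 ^ 2 * ‖gradient f x1‖ ^ 2 + 2 * a1 * ⟪gradient f x1, xstar - x1⟫_ℝ
          + 2 * ‖gradient f x0‖ ^ 2
          + 2 * (silverRho - 1) * ⟪gradient f x0, xstar - x0⟫_ℝ) :=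
  silver_step_identity f (gradient f) rfl hstar silverRho_sq silver_a1_sq

/-- Euclidean base case of the silver step-size certificate (Lemma 5.3, `k = 1`): with
`x_1 = x_0 - (ρ - 1)∇f(x_0)`, `∇f(x_*) = 0`, the co-coercivity quantities
`Q(u,v) = 2(f(u) - f(v)) - 2⟨∇f(v), u - v⟩ - ‖∇f(u) - ∇f(v)‖²` and
`a_1 = (1 + √(4ρ² - 3))/2` satisfy an exact algebraic identity. -/
theorem silver_base_case_identity {d : ℕ}
    (f : EuclideanSpace ℝ (Fin d) → ℝ) (hdiff : Differentiable ℝ f)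
    (x0 xstar : EuclideanSpace ℝ (Fin d)) (hstar : gradient f xstar = 0) :
    let Q : EuclideanSpace ℝ (Fin d) → EuclideanSpace ℝ (Fin d) → ℝ := fun u v =>
      2 * (f u - f v) - 2 * ⟪gradient f v, u - v⟫_ℝ - ‖gradient f u - gradient f v‖ ^ 2
    let a1 : ℝ := (1 + Real.sqrt (4 * silverRho ^ 2 - 3)) / 2
    let x1 : EuclideanSpace ℝ (Fin d) := x0 - (silverRho - 1) • gradient f x0
    silverRho * Q x0 x1 + Q x1 x0 + (silverRho - 1) * Q x1 xstar
        + (silverRho - 1) * Q xstar x0 + a1 * Q xstar x1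
      = 2 * a1 * (f xstar - f x1)
        - (a1 ^ 2 * ‖gradient f x1‖ ^ 2 + 2 * a1 * ⟪gradient f x1, xstar - x1⟫_ℝ
          + 2 * ‖gradient f x0‖ ^ 2
          + 2 * (silverRho - 1) * ⟪gradient f x0, xstar - x0⟫_ℝ) :=
  silver_base_case_identity_general f x0 xstar hstar
end

section
/- Let P and Q be real symmetric positive definite d×d matrices. Then for every t ∈ [0, 1] the matrix (1 − t)·I + t·(PQ) has positive determinant, and the function t ↦ −log det((1 − t)·I + t·(PQ)) is convex on the interval [0, 1]. -/
/-!
Write `P = S * S` with `S` positive definite. By `charpoly (A * B) = charpoly (B * A)`,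
`det ((1 - t) • 1 + t • (S * S * Q)) = det ((1 - t) • 1 + t • (S * Q * S))`, and `S * Q * S` is
positive definite with eigenvalues `μ i > 0`, so the determinant is `∏ i, (1 - t + t * μ i)`.
Each factor is positive on `[0, 1]`, and `-log det` is the sum of the convex functions
`t ↦ -log (1 - t + t * μ i)`.
-/

open Matrix Set

theorem ConvexOn.sum {𝕜 E β ι : Type*} [Semiring 𝕜] [PartialOrder 𝕜] [AddCommMonoid E]
    [AddCommMonoid β] [PartialOrder β] [IsOrderedAddMonoid β] [SMul 𝕜 E] [Module 𝕜 β]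
    {S : Set E} (hS : Convex 𝕜 S) (s : Finset ι) {f : ι → E → β}
    (hf : ∀ i ∈ s, ConvexOn 𝕜 S (f i)) :
    ConvexOn 𝕜 S fun x => ∑ i ∈ s, f i x := by
  simpa only [← Finset.sum_apply] using
    Finset.sum_induction f (ConvexOn 𝕜 S) (fun _ _ => ConvexOn.add) (convexOn_const 0 hS) hf

theorem one_sub_mul_add_mul_pos {a b t : ℝ} (ha : 0 < a) (hb : 0 < b) (ht : t ∈ Icc 0 1) :
    0 < (1 - t) * a + t * b := by
  simpa only [AffineMap.lineMap_apply_module, smul_eq_mul, mem_Ioi] using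
    (convex_Ioi (0 : ℝ)).lineMap_mem ha hb ht

theorem convexOn_neg_log_one_sub_mul_add_mul {a b : ℝ} (ha : 0 < a) (hb : 0 < b) :
    ConvexOn ℝ (Icc 0 1) fun t => -Real.log ((1 - t) * a + t * b) := by
  have := (strictConcaveOn_log_Ioi.concaveOn.neg.comp_affineMap (AffineMap.lineMap a b)).subset
    (fun _ ht => (convex_Ioi (0 : ℝ)).lineMap_mem ha hb ht) (convex_Icc 0 1)
  simpa only [Function.comp_def, AffineMap.lineMap_apply_module, smul_eq_mul, Pi.neg_apply]
    using this

namespace Matrix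

variable {n : Type*} [Fintype n] [DecidableEq n]

theorem det_smul_one_add_smul_mul_comm {R : Type*} [CommRing R] (A B : Matrix n n R) (a b : R) :
    det (a • 1 + b • (A * B)) = det (a • 1 + b • (B * A)) := by
  have eq_eval_charpoly (X Y : Matrix n n R) :
      det (a • 1 + b • (X * Y)) = ((-b • X) * Y).charpoly.eval a := by
    rw [eval_charpoly, smul_mul_assoc, sub_eq_add_neg, ← neg_smul, neg_neg, scalar_apply,
      smul_one_eq_diagonal]
  rw [eq_eval_charpoly, eq_eval_charpoly, charpoly_mul_comm, smul_mul_assoc, mul_smul_comm]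

theorem IsHermitian.det_smul_one_add_smul {𝕜 : Type*} [RCLike 𝕜] {M : Matrix n n 𝕜}
    (hM : M.IsHermitian) (a b : 𝕜) :
    det (a • 1 + b • M) = ∏ i, (a + b * hM.eigenvalues i) := by
  conv_lhs => rw [hM.spectral_theorem,
    ← map_one (Unitary.conjStarAlgAut 𝕜 _ hM.eigenvectorUnitary), ← map_smul, ← map_smul,
    ← map_add, det_map]
  simp only [smul_one_eq_diagonal, ← diagonal_smul, diagonal_add, Pi.smul_apply,
    Function.comp_apply, smul_eq_mul, det_diagonal]

open scoped ComplexOrder MatrixOrder in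
theorem PosDef.exists_posDef_mul_self_eq {𝕜 : Type*} [RCLike 𝕜] {P : Matrix n n 𝕜}
    (hP : P.PosDef) : ∃ S : Matrix n n 𝕜, S.PosDef ∧ S * S = P :=
  ⟨CFC.sqrt P, (IsStrictlyPositive.sqrt P hP.isStrictlyPositive).posDef,
    CFC.sqrt_mul_sqrt_self P hP.posSemidef.nonneg⟩

end Matrix

/-- Example D.8 (Bures–Wasserstein case), core analytic claim: for real symmetric positive
definite matrices `P, Q`, the matrix `(1-t)·I + t·(PQ)` has positive determinant for every
`t ∈ [0,1]`, and `t ↦ -log det((1-t)·I + t·(PQ))` is convex on `[0,1]`. -/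
theorem neg_log_det_convex_along_generalized_geodesic {d : ℕ}
    (P Q : Matrix (Fin d) (Fin d) ℝ) (hP : P.PosDef) (hQ : Q.PosDef) :
    (∀ t ∈ Set.Icc (0 : ℝ) 1,
      0 < ((1 - t) • (1 : Matrix (Fin d) (Fin d) ℝ) + t • (P * Q)).det) ∧
    ConvexOn ℝ (Set.Icc (0 : ℝ) 1)
      (fun t => -Real.log ((1 - t) • (1 : Matrix (Fin d) (Fin d) ℝ) + t • (P * Q)).det) := by
  obtain ⟨S, hS, rfl⟩ := hP.exists_posDef_mul_self_eq
  have hM : (S * Q * S).PosDef := by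
    simpa only [hS.1.eq] using hQ.conjTranspose_mul_mul_same (mulVec_injective_of_isUnit hS.isUnit)
  have hdet (t : ℝ) : det ((1 - t) • 1 + t • (S * S * Q)) =
      ∏ i, ((1 - t) * 1 + t * hM.1.eigenvalues i) := by
    rw [mul_assoc, det_smul_one_add_smul_mul_comm, hM.1.det_smul_one_add_smul]
    simp only [Real.ringHom_apply, mul_one]
  have hfactor_pos : ∀ t ∈ Icc (0 : ℝ) 1, ∀ i,
      0 < (1 - t) * 1 + t * hM.1.eigenvalues i :=
    fun t ht i => one_sub_mul_add_mul_pos one_pos (hM.eigenvalues_pos i) ht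
  refine ⟨fun t ht => hdet t ▸ Finset.prod_pos fun i _ => hfactor_pos t ht i, ?_⟩
  refine (ConvexOn.sum (convex_Icc 0 1) Finset.univ fun i _ =>
    convexOn_neg_log_one_sub_mul_add_mul one_pos (hM.eigenvalues_pos i)).congr fun t ht => ?_
  rw [hdet, Real.log_prod fun i _ => (hfactor_pos t ht i).ne', ← Finset.sum_neg_distrib]
end
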